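/- arXiv:1411.5105 — 4 statements merged into one kernel-verified Lean document; each statement's English description precedes it below -/
import Mathlib

section
/- If a₁,…,aₙ ∈ ℂ is a central configuration, i.e. ω·a_j = Σ_{i≠j} (a_j−a_i)/|a_j−a_i|² for all j, and w(t,s) solves ∂ₜw = i(∂_{ss}w + ω|w|^{−2}w), then u_j(t,s) = w(t,s)·a_j solve the near-parallel vortex filament system ∂ₜu_j = i(∂_{ss}u_j + Σ_{i≠j}(u_j−u_i)/|u_j−u_i|²). -/
open Real Complex Finset

/-- Homographic solutions: if `a₁,…,aₙ` is a central configuration and `w` solves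
`∂ₜw = i(∂_{ss}w + ω|w|⁻²w)`, then `u_j(t,s) = w(t,s)·a_j` solves the near-parallel
vortex filament system. -/
theorem stmt_7 (n : ℕ) (hn : 2 ≤ n) (ω : ℝ) (a : Fin n → ℂ)
    (hinj : Function.Injective a)
    (hcc : ∀ j, (ω : ℂ) * a j =
      ∑ i ∈ Finset.univ.erase j, (a j - a i) / ((‖a j - a i‖ : ℂ)^2))
    (w : ℝ → ℝ → ℂ)
    (hsmooth : ContDiff ℝ (⊤ : ℕ∞) (fun p : ℝ × ℝ => w p.1 p.2))
    (hne : ∀ t s, w t s ≠ 0)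
    (hpde : ∀ t s, deriv (fun t' => w t' s) t =
      Complex.I * (iteratedDeriv 2 (fun s' => w t s') s
        + (ω : ℂ) * ((‖w t s‖ : ℂ)^2)⁻¹ * w t s))
    (u : Fin n → ℝ → ℝ → ℂ)
    (hu : ∀ j t s, u j t s = w t s * a j) :
    ∀ j t s, deriv (fun t' => u j t' s) t =
      Complex.I * (iteratedDeriv 2 (fun s' => u j t s') s
        + ∑ i ∈ Finset.univ.erase j,
            (u j t s - u i t s) / ((‖u j t s - u i t s‖ : ℂ)^2)) := by
  intro j t s
  set W := w t s with hW
  -- differentiability facts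
  have hdt : Differentiable ℝ (fun t' => w t' s) := by
    have := (hsmooth.differentiable (by simp)).comp
      ((differentiable_id.prodMk (differentiable_const s)) : Differentiable ℝ fun t' : ℝ => (t', s))
    exact this
  have hcs : ContDiff ℝ (⊤ : ℕ∞) (fun s' => w t s') := by
    have := hsmooth.comp ((contDiff_const.prodMk contDiff_id) : ContDiff ℝ (⊤ : ℕ∞) fun s' : ℝ => (t, s'))
    exact this
  have hds : Differentiable ℝ (fun s' => w t s') :=
    hcs.differentiable (by simp)
  have hds' : Differentiable ℝ (deriv (fun s' => w t s')) :=
    by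
    have h2 : ContDiff ℝ ((⊤:ℕ∞) : WithTop ℕ∞) (fun s' => w t s') := hcs.of_le (by simp)
    exact ((contDiff_infty_iff_deriv.mp h2).2).differentiable (by simp)
  -- time derivative
  have hDt : deriv (fun t' => u j t' s) t = deriv (fun t' => w t' s) t * a j := by
    have : (fun t' => u j t' s) = fun t' => w t' s * a j := funext fun t' => hu j t' s
    rw [this, deriv_mul_const (hdt t)]
  -- second space derivative
  have hDs : iteratedDeriv 2 (fun s' => u j t s') s
      = iteratedDeriv 2 (fun s' => w t s') s * a j := by
    have e0 : (fun s' => u j t s') = fun s' => w t s' * a j := funext fun s' => hu j t s'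
    have e1 : deriv (fun s' => w t s' * a j) = fun s' => deriv (fun x => w t x) s' * a j :=
      funext fun x => deriv_mul_const (hds x) (a j)
    rw [e0, show (2 : ℕ) = 1 + 1 from rfl, iteratedDeriv_succ, iteratedDeriv_one,
      iteratedDeriv_succ, iteratedDeriv_one, e1, deriv_mul_const (hds' s)]
  -- the nonlinear sum
  have hsum : ∑ i ∈ Finset.univ.erase j,
      (u j t s - u i t s) / ((‖u j t s - u i t s‖ : ℂ)^2)
      = ((‖W‖ : ℂ)^2)⁻¹ * W * ((ω : ℂ) * a j) := by
    rw [hcc j, Finset.mul_sum]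
    refine Finset.sum_congr rfl fun i hi => ?_
    have hij : a j - a i ≠ 0 := sub_ne_zero.mpr fun h => (Finset.mem_erase.mp hi).1 (hinj h.symm)
    have hWne : W ≠ 0 := hne t s
    have habsW : (‖W‖ : ℂ) ≠ 0 := by
      exact_mod_cast norm_ne_zero_iff.mpr hWne
    have habsa : (‖a j - a i‖ : ℂ) ≠ 0 := by
      exact_mod_cast norm_ne_zero_iff.mpr hij
    have hW2 : (‖W‖ : ℂ)^2 = W * (starRingEnd ℂ) W := by
      rw [Complex.mul_conj]
      norm_cast
      exact (Complex.normSq_eq_norm_sq W).symm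
    rw [hu, hu, ← mul_sub]
    rw [norm_mul]
    push_cast
    rw [mul_pow]
    field_simp
    rw [← hW, mul_div_assoc, div_self (pow_ne_zero 2 habsW), mul_one]
  rw [hDt, hpde t s, hDs, hsum]
  ring
end

section
/- If ω is diophantine in the sense that |qω − p| ≥ γ/|q|^τ for all nonzero integers q and all integers p, then for all (j,k) with (j,k) ≠ (1,1), (j,k) ≠ (0,0), and |j|+|k| < L₀, the determinant satisfies |2(k²−j²)ω + (k⁴−j²)| ≥ c·γ/L₀^{2τ} for a constant c > 0 depending only on τ. -/
open Real

def Diophantine (γ τ ω : ℝ) : Prop :=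
  ∀ p q : ℤ, q ≠ 0 → γ / (|q| : ℝ) ^ τ ≤ |(q : ℝ) * ω - p|

lemma abs_sq_sub_sq_le_sq_of_add_lt {j k : ℕ} {L : ℝ} (h : (j : ℝ) + k < L) :
    |(k : ℝ) ^ 2 - (j : ℝ) ^ 2| ≤ L ^ 2 := by
  have hj : (0 : ℝ) ≤ j := j.cast_nonneg
  have hk : (0 : ℝ) ≤ k := k.cast_nonneg
  rw [abs_le]
  constructor <;> nlinarith

namespace Diophantine

variable {γ τ ω : ℝ}

lemma le_half (h : Diophantine γ τ ω) : γ ≤ 1 / 2 := by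
  have h₁ := h (round ω) 1 one_ne_zero
  simp only [Int.cast_one, abs_one, one_rpow, div_one, one_mul] at h₁
  exact h₁.trans (abs_sub_round ω)

lemma div_rpow_le_abs_mul_sub (h : Diophantine γ τ ω) (hγ : 0 ≤ γ) (hτ : 0 ≤ τ)
    {p q : ℤ} (hq : q ≠ 0) {Q : ℝ} (hQ : |(q : ℝ)| ≤ Q) :
    γ / Q ^ τ ≤ |(q : ℝ) * ω - p| := by
  have hq₁ : (1 : ℝ) ≤ |(q : ℝ)| := by
    rw [← Int.cast_abs]; exact_mod_cast Int.one_le_abs hq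
  calc γ / Q ^ τ ≤ γ / |(q : ℝ)| ^ τ := by
        gcongr
    _ ≤ _ := h p q hq

/-- The small divisor `d_{j,k}` is `q ω - p` with `q = 2 (k² - j²)`, `p = j² - k⁴`; on the
diagonal `q = 0`, but then `d_{j,j} = j⁴ - j² ≥ 12` because `j ≥ 2`. -/
lemma div_rpow_le_abs_det (h : Diophantine γ τ ω) (hγ : 0 ≤ γ) (hτ : 0 ≤ τ) {L : ℝ}
    {j k : ℕ} (hjk : (j : ℝ) + k < L) (h11 : (j, k) ≠ (1, 1)) (h00 : (j, k) ≠ (0, 0)) :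
    γ / (2 * L ^ 2) ^ τ ≤ |2 * ((k : ℝ) ^ 2 - (j : ℝ) ^ 2) * ω + ((k : ℝ) ^ 4 - (j : ℝ) ^ 2)| := by
  by_cases hkj : j = k
  · subst hkj
    have hj : 2 ≤ j := by
      by_contra! hj
      interval_cases j <;> simp_all
    have hj' : (2 : ℝ) ≤ j := by exact_mod_cast hj
    have hdet : (1 : ℝ) ≤ (j : ℝ) ^ 4 - (j : ℝ) ^ 2 := by
      nlinarith [mul_le_mul hj' hj' (by norm_num) (by linarith)]
    have hQ : (1 : ℝ) ≤ (2 * L ^ 2) ^ τ := one_le_rpow (by nlinarith) hτ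
    rw [sub_self, mul_zero, zero_mul, zero_add, abs_of_nonneg (by linarith)]
    linarith [div_le_self hγ hQ, h.le_half]
  · have hq : (2 * ((k : ℤ) ^ 2 - (j : ℤ) ^ 2)) ≠ 0 := by
      intro hq
      have : j ^ 2 = k ^ 2 := by zify; linarith
      exact hkj (Nat.pow_left_injective two_ne_zero this)
    have hQ : |((2 * ((k : ℤ) ^ 2 - (j : ℤ) ^ 2) : ℤ) : ℝ)| ≤ 2 * L ^ 2 := by
      push_cast
      rw [abs_mul, abs_two]
      linarith [abs_sq_sub_sq_le_sq_of_add_lt hjk]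
    convert h.div_rpow_le_abs_mul_sub hγ hτ (p := (j : ℤ) ^ 2 - (k : ℤ) ^ 4) hq hQ using 2
    push_cast
    ring

end Diophantine

/-- If ω is diophantine (`|qω − p| ≥ γ/|q|^τ` for all integers `p` and nonzero `q`),
then for all `(j,k) ∉ {(1,1),(0,0)}` with `|j|+|k| < L₀`, the determinant satisfies
`|2(k²−j²)ω + (k⁴−j²)| ≥ cγ/L₀^{2τ}` with `c > 0` depending only on `τ`. -/
theorem stmt_9 (τ : ℝ) (hτ : 1 ≤ τ) :
    ∃ c : ℝ, 0 < c ∧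
      ∀ (γ ω : ℝ) (L₀ : ℝ) (j k : ℕ),
        0 < γ → 0 < ω → 2 ≤ L₀ →
        (∀ (p q : ℤ), q ≠ 0 → γ / (|q| : ℝ)^τ ≤ |(q : ℝ) * ω - (p : ℝ)|) →
        (j : ℝ) + (k : ℝ) < L₀ →
        (j, k) ≠ (1, 1) → (j, k) ≠ (0, 0) →
        c * γ / L₀^(2*τ) ≤ |2 * ((k : ℝ)^2 - (j : ℝ)^2) * ω + ((k : ℝ)^4 - (j : ℝ)^2)| := by
  refine ⟨(2 ^ τ)⁻¹, by positivity, ?_⟩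
  intro γ ω L₀ j k hγ _ hL₀ hdio hjk h11 h00
  have hL : 0 ≤ L₀ := by linarith
  calc (2 ^ τ)⁻¹ * γ / L₀ ^ (2 * τ) = γ / (2 * L₀ ^ 2) ^ τ := by
        rw [mul_rpow (by norm_num) (by positivity), ← rpow_natCast_mul hL]
        push_cast
        field_simp
    _ ≤ _ := Diophantine.div_rpow_le_abs_det hdio hγ.le (by linarith) hjk h11 h00
end

section
/- With the weighted operator norm ‖G‖_σ (max of weighted row and column sums), for any 0 < γ < σ one has ‖G‖_{σ−γ} ≤ c_γ · sup_x ‖P_x G‖_σ, where P_x G is the x-th row of G and c_γ = Σ_{m∈ℤ²} e^{−γ|m|} < ∞. -/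
open Real

/-- Euclidean norm of a lattice point of ℤ². -/
noncomputable def latNorm (z : ℤ × ℤ) : ℝ :=
  Real.sqrt ((z.1 : ℝ)^2 + (z.2 : ℝ)^2)

/-- The weighted operator norm (max of weighted row and column sums), in `ℝ≥0∞`. -/
noncomputable def wnorm (σ s : ℝ) (G : ℤ × ℤ → ℤ × ℤ → ℂ) : ENNReal :=
  max
    (⨆ x : ℤ × ℤ, ∑' y : ℤ × ℤ, (‖G x y‖₊ : ENNReal)
      * ENNReal.ofReal (Real.exp (σ * latNorm (x - y)) * (1 + (latNorm (x - y))^2)^(s/2)))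
    (⨆ y : ℤ × ℤ, ∑' x : ℤ × ℤ, (‖G x y‖₊ : ENNReal)
      * ENNReal.ofReal (Real.exp (σ * latNorm (x - y)) * (1 + (latNorm (x - y))^2)^(s/2)))

/-- The matrix `G` restricted to the single row `x`. -/
noncomputable def rowP (x : ℤ × ℤ) (G : ℤ × ℤ → ℤ × ℤ → ℂ) : ℤ × ℤ → ℤ × ℤ → ℂ :=
  fun x' y => if x' = x then G x y else 0

/-!
Write `w_σ(m) = e^{σ|m|} ⟨m⟩^s`, so that `w_{σ-γ} = w_σ · e^{-γ|·|}`. The `x`-th row sum of `G` is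
a row sum of `P_x G`, and lowering `σ` only decreases it; since `c_γ ≥ 1` (the term `m = 0`) the
rows are fine. For a column `y`, each entry satisfies `|G(x,y)| w_σ(x-y) ≤ ‖P_x G‖_σ`, so the
`(σ-γ)`-weighted column sum is at most `sup_x ‖P_x G‖_σ · Σ_x e^{-γ|x-y|} = c_γ · sup_x ‖P_x G‖_σ`.
-/

lemma latNorm_nonneg (m : ℤ × ℤ) : 0 ≤ latNorm m := Real.sqrt_nonneg _

@[simp] lemma latNorm_zero : latNorm 0 = 0 := by simp [latNorm]

noncomputable def weight (σ s : ℝ) (m : ℤ × ℤ) : ENNReal :=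
  ENNReal.ofReal (Real.exp (σ * latNorm m) * (1 + latNorm m ^ 2) ^ (s / 2))

noncomputable def decay (γ : ℝ) (m : ℤ × ℤ) : ENNReal :=
  ENNReal.ofReal (Real.exp (-γ * latNorm m))

lemma wnorm_eq_max_iSup (σ s : ℝ) (G : ℤ × ℤ → ℤ × ℤ → ℂ) :
    wnorm σ s G = max (⨆ x, ∑' y, (‖G x y‖₊ : ENNReal) * weight σ s (x - y))
      (⨆ y, ∑' x, (‖G x y‖₊ : ENNReal) * weight σ s (x - y)) := rfl

lemma weight_sub (σ γ s : ℝ) (m : ℤ × ℤ) :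
    weight (σ - γ) s m = weight σ s m * decay γ m := by
  rw [weight, weight, decay, ← ENNReal.ofReal_mul (by positivity), mul_right_comm,
    ← Real.exp_add]
  ring_nf

lemma weight_mono {τ σ : ℝ} (h : τ ≤ σ) (s : ℝ) (m : ℤ × ℤ) : weight τ s m ≤ weight σ s m := by
  unfold weight
  gcongr
  exact latNorm_nonneg m

lemma one_le_tsum_decay (γ : ℝ) : 1 ≤ ∑' m, decay γ m :=
  le_of_eq_of_le (by simp [decay]) (ENNReal.le_tsum 0)

lemma tsum_decay_sub (γ : ℝ) (y : ℤ × ℤ) : ∑' x, decay γ (x - y) = ∑' m, decay γ m :=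
  (Equiv.subRight y).tsum_eq (decay γ)

lemma rowSum_le_wnorm (σ s : ℝ) (G : ℤ × ℤ → ℤ × ℤ → ℂ) (x : ℤ × ℤ) :
    ∑' y, (‖G x y‖₊ : ENNReal) * weight σ s (x - y) ≤ wnorm σ s G :=
  (le_iSup (fun x => ∑' y, (‖G x y‖₊ : ENNReal) * weight σ s (x - y)) x).trans
    (le_max_left _ _)

lemma rowSum_le_wnorm_rowP (σ s : ℝ) (G : ℤ × ℤ → ℤ × ℤ → ℂ) (x : ℤ × ℤ) :
    ∑' y, (‖G x y‖₊ : ENNReal) * weight σ s (x - y) ≤ wnorm σ s (rowP x G) := by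
  simpa [rowP] using rowSum_le_wnorm σ s (rowP x G) x

lemma entry_le_wnorm_rowP (σ s : ℝ) (G : ℤ × ℤ → ℤ × ℤ → ℂ) (x y : ℤ × ℤ) :
    (‖G x y‖₊ : ENNReal) * weight σ s (x - y) ≤ wnorm σ s (rowP x G) :=
  (ENNReal.le_tsum y).trans (rowSum_le_wnorm_rowP σ s G x)

lemma rowSum_sub_le (σ s : ℝ) (G : ℤ × ℤ → ℤ × ℤ → ℂ) {γ : ℝ} (hγ : 0 ≤ γ) (x : ℤ × ℤ) :
    ∑' y, (‖G x y‖₊ : ENNReal) * weight (σ - γ) s (x - y) ≤ ⨆ x, wnorm σ s (rowP x G) :=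
  calc ∑' y, (‖G x y‖₊ : ENNReal) * weight (σ - γ) s (x - y)
      ≤ ∑' y, (‖G x y‖₊ : ENNReal) * weight σ s (x - y) :=
        ENNReal.tsum_le_tsum fun y => by gcongr; exact weight_mono (by linarith) s _
    _ ≤ wnorm σ s (rowP x G) := rowSum_le_wnorm_rowP σ s G x
    _ ≤ ⨆ x, wnorm σ s (rowP x G) := le_iSup (fun x => wnorm σ s (rowP x G)) x

lemma colSum_sub_le (σ γ s : ℝ) (G : ℤ × ℤ → ℤ × ℤ → ℂ) (y : ℤ × ℤ) :
    ∑' x, (‖G x y‖₊ : ENNReal) * weight (σ - γ) s (x - y)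
      ≤ (∑' m, decay γ m) * ⨆ x, wnorm σ s (rowP x G) :=
  calc ∑' x, (‖G x y‖₊ : ENNReal) * weight (σ - γ) s (x - y)
      = ∑' x, (‖G x y‖₊ : ENNReal) * weight σ s (x - y) * decay γ (x - y) := by
        simp only [weight_sub, mul_assoc]
    _ ≤ ∑' x, (⨆ x, wnorm σ s (rowP x G)) * decay γ (x - y) :=
        ENNReal.tsum_le_tsum fun x => by
          gcongr
          exact (entry_le_wnorm_rowP σ s G x y).trans
            (le_iSup (fun x => wnorm σ s (rowP x G)) x)
    _ = (∑' m, decay γ m) * ⨆ x, wnorm σ s (rowP x G) := by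
        rw [ENNReal.tsum_mul_left, tsum_decay_sub, mul_comm]

theorem stmt_14_general (σ γ s : ℝ) (hγ : 0 < γ)
    (G : ℤ × ℤ → ℤ × ℤ → ℂ) :
    wnorm (σ - γ) s G ≤
      (∑' m : ℤ × ℤ, ENNReal.ofReal (Real.exp (-γ * latNorm m)))
        * ⨆ x : ℤ × ℤ, wnorm σ s (rowP x G) := by
  rw [wnorm_eq_max_iSup]
  refine max_le (iSup_le fun x => ?_) (iSup_le (colSum_sub_le σ γ s G))
  exact (rowSum_sub_le σ s G hγ.le x).trans
    (le_mul_of_one_le_left zero_le (one_le_tsum_decay γ))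

/-- Row-wise estimate: `‖G‖_{σ−γ} ≤ c_γ · sup_x ‖P_x G‖_σ` with
`c_γ = Σ_{m∈ℤ²} e^{−γ|m|}`. -/
theorem stmt_14 (σ γ s : ℝ) (hs : 0 ≤ s) (hγ : 0 < γ) (hγσ : γ < σ)
    (G : ℤ × ℤ → ℤ × ℤ → ℂ) :
    wnorm (σ - γ) s G ≤
      (∑' m : ℤ × ℤ, ENNReal.ofReal (Real.exp (-γ * latNorm m)))
        * ⨆ x : ℤ × ℤ, wnorm σ s (rowP x G) :=
  stmt_14_general σ γ s hγ G
end

section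
/- Let (j₁,k₁) and (j₂,k₂) be distinct pairs with λ_{jᵢ,kᵢ} = kᵢ² + ω − √(jᵢ²Ω² + ω²) satisfying |λ_{jᵢ,kᵢ}| ≤ d₀. Then for d₀ sufficiently small there exists a constant C > 0 (depending only on Ω, ω) such that |j₁ − j₂| ≥ C|k₁ + k₂|. -/
/-!
Write `s(a) = √(a²Ω² + ω²)`. Since `s` is `Ω`-Lipschitz, two singular sites satisfy
`|k₁² - k₂²| ≤ Ω |j₁ - j₂| + 2 d₀`. If `k₁ ≠ k₂` the left side is at least `k₁ + k₂ ≥ 1`, so for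
`d₀ < 1/2` this forces `j₁ ≠ j₂` and then `k₁ + k₂ ≤ (Ω + 1) |j₁ - j₂|`. If `k₁ = k₂` the sites would
need `|s(j₁) - s(j₂)| ≤ 2 d₀`, which small `d₀` rules out: `s` separates distinct naturals by at
least `Ω² / (Ω + 2ω)`, because `(s(a) - s(b)) (s(a) + s(b)) = (a² - b²) Ω²` and
`s(a) + s(b) ≤ (a + b)(Ω + 2ω)`.
-/

open Real

lemma abs_sqrt_sq_add_sub_sqrt_sq_add_le {c : ℝ} (hc : 0 ≤ c) (x y : ℝ) :
    |√(x ^ 2 + c) - √(y ^ 2 + c)| ≤ |x - y| := by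
  set u := √(x ^ 2 + c)
  set v := √(y ^ 2 + c)
  have hu : u ^ 2 = x ^ 2 + c := sq_sqrt (by positivity)
  have hv : v ^ 2 = y ^ 2 + c := sq_sqrt (by positivity)
  -- `(x² + c)(y² + c) - (xy + c)² = c (x - y)²`
  have huv : x * y + c ≤ u * v := by
    refine abs_le_of_sq_le_sq' ?_ (by positivity) |>.2
    nlinarith [mul_nonneg hc (sq_nonneg (x - y))]
  exact sq_le_sq.mp (by nlinarith)

lemma abs_sqrt_dispersion_sub_le {Ω : ℝ} (hΩ : 0 ≤ Ω) (ω a b : ℝ) :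
    |√(a ^ 2 * Ω ^ 2 + ω ^ 2) - √(b ^ 2 * Ω ^ 2 + ω ^ 2)| ≤ Ω * |a - b| := by
  simpa only [← mul_pow, ← sub_mul, abs_mul, abs_of_nonneg hΩ, mul_comm Ω]
    using abs_sqrt_sq_add_sub_sqrt_sq_add_le (sq_nonneg ω) (a * Ω) (b * Ω)

lemma sqrt_dispersion_le {Ω ω a : ℝ} (hΩ : 0 ≤ Ω) (hω : 0 ≤ ω) (ha : 0 ≤ a) :
    √(a ^ 2 * Ω ^ 2 + ω ^ 2) ≤ a * Ω + ω :=
  (sqrt_le_left (by positivity)).2 (by nlinarith [mul_nonneg (mul_nonneg ha hΩ) hω])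

lemma div_le_sqrt_dispersion_sub {Ω ω a b : ℝ} (hΩ : 0 < Ω) (hω : 0 ≤ ω) (hb : 0 ≤ b)
    (hab : b + 1 ≤ a) :
    Ω ^ 2 / (Ω + 2 * ω) ≤ √(a ^ 2 * Ω ^ 2 + ω ^ 2) - √(b ^ 2 * Ω ^ 2 + ω ^ 2) := by
  set u := √(a ^ 2 * Ω ^ 2 + ω ^ 2)
  set v := √(b ^ 2 * Ω ^ 2 + ω ^ 2)
  have hu : u ^ 2 = a ^ 2 * Ω ^ 2 + ω ^ 2 := sq_sqrt (by positivity)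
  have hv : v ^ 2 = b ^ 2 * Ω ^ 2 + ω ^ 2 := sq_sqrt (by positivity)
  have hsum : u + v ≤ (a + b) * (Ω + 2 * ω) := by
    nlinarith [sqrt_dispersion_le hΩ.le hω (by linarith : 0 ≤ a), sqrt_dispersion_le hΩ.le hω hb]
  have hsum_pos : 0 < u + v := by
    have ha : 0 < a := by linarith
    have : 0 < u := sqrt_pos.2 (by positivity)
    positivity
  have hprod : (u - v) * (u + v) = (a ^ 2 - b ^ 2) * Ω ^ 2 := by nlinarith
  have hsq : a + b ≤ a ^ 2 - b ^ 2 := by nlinarith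
  rw [div_le_iff₀ (by positivity)]
  refine le_of_mul_le_mul_right ?_ hsum_pos
  calc Ω ^ 2 * (u + v) ≤ Ω ^ 2 * ((a + b) * (Ω + 2 * ω)) := by gcongr
    _ ≤ (a ^ 2 - b ^ 2) * Ω ^ 2 * (Ω + 2 * ω) := by
      rw [← mul_assoc, mul_comm (Ω ^ 2)]; gcongr
    _ = (u - v) * (Ω + 2 * ω) * (u + v) := by rw [← hprod]; ring

lemma div_le_abs_sqrt_dispersion_sub {Ω ω : ℝ} (hΩ : 0 < Ω) (hω : 0 ≤ ω) {m n : ℕ}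
    (hmn : m ≠ n) :
    Ω ^ 2 / (Ω + 2 * ω) ≤
      |√((m : ℝ) ^ 2 * Ω ^ 2 + ω ^ 2) - √((n : ℝ) ^ 2 * Ω ^ 2 + ω ^ 2)| := by
  rcases hmn.lt_or_gt with h | h
  · rw [abs_sub_comm]
    exact (div_le_sqrt_dispersion_sub hΩ hω m.cast_nonneg (by exact_mod_cast h)).trans
      (le_abs_self _)
  · exact (div_le_sqrt_dispersion_sub hΩ hω n.cast_nonneg (by exact_mod_cast h)).trans
      (le_abs_self _)

lemma one_le_abs_natCast_sub_natCast {m n : ℕ} (h : m ≠ n) : (1 : ℝ) ≤ |(m : ℝ) - n| := by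
  exact_mod_cast Int.one_le_abs (sub_ne_zero.2 (Int.natCast_inj.not.2 h))

lemma natCast_add_le_abs_sq_sub_sq {m n : ℕ} (h : m ≠ n) :
    (m + n : ℝ) ≤ |(m : ℝ) ^ 2 - (n : ℝ) ^ 2| := by
  have hsum : (0 : ℝ) ≤ m + n := by positivity
  rw [sq_sub_sq, abs_mul, abs_of_nonneg hsum]
  exact le_mul_of_one_le_right hsum (one_le_abs_natCast_sub_natCast h)

/-- Separation of singular sites: there exist `d₀ > 0` and `C > 0` such that any two
distinct singular sites `(j₁,k₁) ≠ (j₂,k₂)` (with `|λ_{jᵢ,kᵢ}| ≤ d₀`,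
`λ_{j,k} = k² + ω − √(j²Ω² + ω²)`) satisfy `|j₁ − j₂| ≥ C|k₁ + k₂|`. -/
theorem stmt_15 (Ω ω : ℝ) (hΩ : 0 < Ω) (hω : 0 < ω) :
    ∃ d₀ > (0:ℝ), ∃ C > (0:ℝ),
      ∀ (j₁ k₁ j₂ k₂ : ℕ), 1 ≤ j₁ → 1 ≤ j₂ → (j₁, k₁) ≠ (j₂, k₂) →
        |(k₁ : ℝ)^2 + ω - Real.sqrt ((j₁ : ℝ)^2 * Ω^2 + ω^2)| ≤ d₀ →
        |(k₂ : ℝ)^2 + ω - Real.sqrt ((j₂ : ℝ)^2 * Ω^2 + ω^2)| ≤ d₀ →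
        C * |(k₁ : ℝ) + (k₂ : ℝ)| ≤ |(j₁ : ℝ) - (j₂ : ℝ)| := by
  set g := Ω ^ 2 / (Ω + 2 * ω)
  have hd₀ : min 1 g / 4 ≤ 1 / 4 ∧ min 1 g / 4 ≤ g / 4 := by
    constructor <;> gcongr <;> simp
  refine ⟨min 1 g / 4, by positivity, 1 / (Ω + 1), by positivity, ?_⟩
  intro j₁ k₁ j₂ k₂ _ _ hne h₁ h₂
  set s₁ := √((j₁ : ℝ) ^ 2 * Ω ^ 2 + ω ^ 2)
  set s₂ := √((j₂ : ℝ) ^ 2 * Ω ^ 2 + ω ^ 2)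
  have hsites : |((k₁ : ℝ) ^ 2 - (k₂ : ℝ) ^ 2) - (s₁ - s₂)| ≤ 2 * (min 1 g / 4) := by
    calc _ = |((k₁ : ℝ) ^ 2 + ω - s₁) - ((k₂ : ℝ) ^ 2 + ω - s₂)| := by ring_nf
      _ ≤ _ := (abs_sub _ _).trans (add_le_add h₁ h₂)
      _ = _ := by ring
  by_cases hk : k₁ = k₂
  · subst hk
    have hj : j₁ ≠ j₂ := fun h => hne (h ▸ rfl)
    rw [sub_self, zero_sub, abs_neg] at hsites
    linarith [div_le_abs_sqrt_dispersion_sub hΩ hω.le hj, show 0 < g by positivity]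
  have hk_sum : (1 : ℝ) ≤ k₁ + k₂ := by exact_mod_cast (by omega : 1 ≤ k₁ + k₂)
  have hk_sq := natCast_add_le_abs_sq_sub_sq hk
  have hj : j₁ ≠ j₂ := by
    rintro rfl
    rw [sub_self, sub_zero] at hsites
    linarith
  have hs := abs_sqrt_dispersion_sub_le hΩ.le ω j₁ j₂
  have hj_sub := one_le_abs_natCast_sub_natCast hj
  rw [abs_of_nonneg (by positivity), one_div_mul_eq_div, div_le_iff₀ (by positivity)]
  linarith [abs_sub_abs_le_abs_sub ((k₁ : ℝ) ^ 2 - (k₂ : ℝ) ^ 2) (s₁ - s₂)]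
end
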